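/- Fix d = 4, let i₁, i₂, j₁, j₂ ∈ {0, 1}, 0 ≤ l₁, l₂ ≤ N−1, and 0 ≤ τ ≤ N−1, and set a = α^{i₁} − α^{2τ + i₂} and b = α^{d·l₁ + j₁} − α^{d·τ + d·l₂ + j₂} in F_q. If a = 0 and b = 0, then τ = 0, i₁ = i₂, j₁ = j₂, and l₁ = l₂ (i.e. a = b = 0 occurs only in the trivial autocorrelation case). -/

import Mathlib

/-! Since `q ≡ 3 (mod 4)`, the primitive element `α` has order `q - 1 = 2N` with `N` odd.
Both exponents in `a = 0` are below `2N`, so `i₁ = 2τ + i₂`, forcing `τ = 0`. Then `b = 0` gives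
`4l₁ + j₁ ≡ 4l₂ + j₂ (mod 2N)`: parity yields `j₁ = j₂`, and since `2` is invertible modulo the
odd `N`, `l₁ ≡ l₂ (mod N)`. -/

lemma Nat.pow_mod_four_eq_three_of_odd {p n : ℕ} (hp : p % 4 = 3) (hn : Odd n) :
    p ^ n % 4 = 3 := by
  obtain ⟨m, rfl⟩ := hn
  rw [Nat.pow_mod, hp, pow_succ, pow_mul, Nat.mul_mod, Nat.pow_mod]
  norm_num

lemma isPrimitiveRoot_card_sub_one_of_forall_pow_eq {F : Type*} [Field F] [Fintype F]
    (hF : 2 < Fintype.card F) {α : F} (hα : ∀ x : F, x ≠ 0 → ∃ k : ℕ, α ^ k = x) :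
    IsPrimitiveRoot α (Fintype.card F - 1) := by
  classical
  have hunits : Fintype.card Fˣ = Fintype.card F - 1 := Fintype.card_units F
  have hα0 : α ≠ 0 := by
    rintro rfl
    obtain ⟨u, hu⟩ := Fintype.exists_ne_of_one_lt_card (by omega : 1 < Fintype.card Fˣ) 1
    obtain ⟨k, hk⟩ := hα u u.ne_zero
    rcases k with _ | k
    · exact hu (Units.ext (by simpa using hk.symm))
    · exact u.ne_zero (by simp [← hk])
  have hgen : ∀ x : Fˣ, x ∈ Subgroup.zpowers (Units.mk0 α hα0) := fun x ↦ by
    obtain ⟨k, hk⟩ := hα x x.ne_zero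
    exact ⟨k, Units.ext (by simpa using hk)⟩
  rw [← Units.val_mk0 hα0, IsPrimitiveRoot.coe_units_iff, IsPrimitiveRoot.iff_orderOf,
    orderOf_eq_card_of_forall_mem_zpowers hgen, Nat.card_eq_fintype_card, hunits]

lemma eq_and_eq_of_four_mul_add_modEq_two_mul {N l₁ l₂ j₁ j₂ : ℕ} (hN : Odd N)
    (hl₁ : l₁ < N) (hl₂ : l₂ < N) (hj₁ : j₁ ≤ 1) (hj₂ : j₂ ≤ 1)
    (h : 4 * l₁ + j₁ ≡ 4 * l₂ + j₂ [MOD 2 * N]) : j₁ = j₂ ∧ l₁ = l₂ := by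
  have hj : j₁ = j₂ := by
    have h2 : 4 * l₁ + j₁ ≡ 4 * l₂ + j₂ [MOD 2] := h.of_mul_right N
    unfold Nat.ModEq at h2
    omega
  subst hj
  have h4 : 2 * (2 * l₁) ≡ 2 * (2 * l₂) [MOD 2 * N] := by
    rw [← mul_assoc, ← mul_assoc]
    exact Nat.ModEq.add_right_cancel' j₁ h
  have h2 : 2 * l₁ ≡ 2 * l₂ [MOD N] := Nat.ModEq.mul_left_cancel' two_ne_zero h4
  exact ⟨rfl, (h2.cancel_left_of_coprime (Nat.coprime_two_right.mpr hN)).eq_of_lt_of_lt hl₁ hl₂⟩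

theorem statement_11_general
    (p n : ℕ) (hp3 : p % 4 = 3) (hn : Odd n)
    (F : Type) [Field F] [Fintype F]
    (hcard : Fintype.card F = p ^ n)
    (α : F) (hα : ∀ x : F, x ≠ 0 → ∃ k : ℕ, α ^ k = x)
    (N : ℕ) (hN : N = (p ^ n - 1) / 2)
    (i₁ j₁ l₁ i₂ j₂ l₂ τ : ℕ)
    (hi₁ : i₁ ≤ 1) (hj₁ : j₁ ≤ 1) (hl₁ : l₁ < N)
    (hi₂ : i₂ ≤ 1) (hj₂ : j₂ ≤ 1) (hl₂ : l₂ < N) (hτ : τ < N)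
    (ha : α ^ i₁ - α ^ (2 * τ + i₂) = 0)
    (hb : α ^ (4 * l₁ + j₁) - α ^ (4 * τ + 4 * l₂ + j₂) = 0) :
    τ = 0 ∧ i₁ = i₂ ∧ j₁ = j₂ ∧ l₁ = l₂ := by
  have hq := Nat.pow_mod_four_eq_three_of_odd hp3 hn
  have hcard₁ : Fintype.card F - 1 = 2 * N := by omega
  have hNodd : Odd N := ⟨p ^ n / 4, by omega⟩
  have hprim : IsPrimitiveRoot α (2 * N) :=
    hcard₁ ▸ isPrimitiveRoot_card_sub_one_of_forall_pow_eq (by omega) hα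
  have hi : i₁ = 2 * τ + i₂ := hprim.pow_inj (by omega) (by omega) (sub_eq_zero.mp ha)
  obtain rfl : τ = 0 := by omega
  have hmod : 4 * l₁ + j₁ ≡ 4 * l₂ + j₂ [MOD 2 * N] := by
    rw [hprim.eq_orderOf, ← (hprim.isOfFinOrder (by omega)).pow_eq_pow_iff_modEq]
    simpa using sub_eq_zero.mp hb
  exact ⟨rfl, by omega, eq_and_eq_of_four_mul_add_modEq_two_mul hNodd hl₁ hl₂ hj₁ hj₂ hmod⟩

/-- For `d = 4`, with `i₁, i₂, j₁, j₂ ∈ {0,1}`, `0 ≤ l₁, l₂ ≤ N-1`, `0 ≤ τ ≤ N-1`,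
`a = α^{i₁} - α^{2τ+i₂}` and `b = α^{4l₁+j₁} - α^{4τ+4l₂+j₂}`: if `a = 0` and `b = 0`,
then `τ = 0`, `i₁ = i₂`, `j₁ = j₂` and `l₁ = l₂`. -/
theorem statement_11
    (p n : ℕ) (hp : p.Prime) (hp3 : p % 4 = 3) (hn : Odd n)
    (F : Type) [Field F] [Fintype F]
    (hcard : Fintype.card F = p ^ n)
    (α : F) (hα : ∀ x : F, x ≠ 0 → ∃ k : ℕ, α ^ k = x)
    (N : ℕ) (hN : N = (p ^ n - 1) / 2)
    (i₁ j₁ l₁ i₂ j₂ l₂ τ : ℕ)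
    (hi₁ : i₁ ≤ 1) (hj₁ : j₁ ≤ 1) (hl₁ : l₁ < N)
    (hi₂ : i₂ ≤ 1) (hj₂ : j₂ ≤ 1) (hl₂ : l₂ < N) (hτ : τ < N)
    (ha : α ^ i₁ - α ^ (2 * τ + i₂) = 0)
    (hb : α ^ (4 * l₁ + j₁) - α ^ (4 * τ + 4 * l₂ + j₂) = 0) :
    τ = 0 ∧ i₁ = i₂ ∧ j₁ = j₂ ∧ l₁ = l₂ :=
  statement_11_general p n hp3 hn F hcard α hα N hN i₁ j₁ l₁ i₂ j₂ l₂ τ hi₁ hj₁ hl₁ hi₂ hj₂ hl₂ hτ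
    ha hb
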